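/- Let f̄ ∈ ℝ and let f : ℝ → ℝ be measurable with f − f̄ ∈ L^1(ℝ). Let γ > 0 and let (e_ν)_{ν>0} be a family of Lipschitz functions e_ν : ℝ → ℝ such that e_ν'(x) ≥ γ for a.e. x ∈ ℝ and every ν > 0, and such that e_ν(x) → x as ν → 0, pointwise on ℝ and uniformly on every compact subset of ℝ. Then for every ν > 0 the function x ↦ f(x) − f(e_ν(x)) belongs to L^1(ℝ), and ∫_ℝ |f(x) − f(e_ν(x))| dx → 0 as ν → 0. -/

import Mathlib

/-! Integrating the a.e. bound `e_ν' ≥ γ` (a Lipschitz function is absolutely continuous) gives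
`γ (b - a) ≤ e_ν b - e_ν a`, so `e_ν` is monotone and `γ⁻¹`-antilipschitz, hence
`volume.map e_ν ≤ γ⁻¹ • volume`: composition with `e_ν` is bounded on `L¹` uniformly in `ν`.
Since `f - f ∘ e_ν = g - g ∘ e_ν` with `g = f - f̄ ∈ L¹`, it suffices to show `‖g - g ∘ e_ν‖₁ → 0`.
For continuous compactly supported `g` this is dominated convergence, monotonicity of `e_ν`
keeping the supports of `g ∘ e_ν` in a fixed interval; the uniform bound extends it to all of `L¹`
by density. -/

open MeasureTheory Filter Set Topology
open scoped NNReal ENNReal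

theorem LipschitzWith.mul_sub_le_sub_of_ae_le_hasDerivAt {E : ℝ → ℝ} {L : ℝ≥0}
    (hE : LipschitzWith L E) {γ : ℝ} (hd : ∀ᵐ x, ∃ d, HasDerivAt E d x ∧ γ ≤ d)
    {a b : ℝ} (hab : a ≤ b) : γ * (b - a) ≤ E b - E a := by
  have hac := (hE.lipschitzOnWith (s := uIcc a b)).absolutelyContinuousOnInterval
  rw [← hac.integral_deriv_eq_sub, show γ * (b - a) = ∫ _ in a..b, γ by simp [mul_comm]]
  refine intervalIntegral.integral_mono_ae hab intervalIntegrable_const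
    hac.intervalIntegrable_deriv ?_
  filter_upwards [hd] with x ⟨d, hx, hγd⟩
  simpa [hx.deriv] using hγd

theorem antilipschitzWith_of_mul_sub_le_sub {E : ℝ → ℝ} {γ : ℝ} (hγ : 0 < γ)
    (hE : ∀ a b, a ≤ b → γ * (b - a) ≤ E b - E a) :
    AntilipschitzWith (Real.toNNReal γ)⁻¹ E := by
  refine AntilipschitzWith.of_le_mul_dist fun x y => ?_
  rw [NNReal.coe_inv, Real.coe_toNNReal _ hγ.le, Real.dist_eq, Real.dist_eq, inv_mul_eq_div,
    le_div_iff₀ hγ]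
  rcases le_total x y with hxy | hxy
  · rw [abs_sub_comm, abs_sub_comm (E x), abs_of_nonneg (sub_nonneg.2 hxy), mul_comm]
    exact (hE x y hxy).trans (le_abs_self _)
  · rw [abs_of_nonneg (sub_nonneg.2 hxy), mul_comm]
    exact (hE y x hxy).trans (le_abs_self _)

theorem AntilipschitzWith.map_volume_le {K : ℝ≥0} {E : ℝ → ℝ} (hE : AntilipschitzWith K E)
    (hm : Measurable E) : volume.map E ≤ K • volume := by
  refine Measure.le_iff.2 fun s hs => ?_
  rw [Measure.map_apply hm hs, Measure.smul_apply, ← hausdorffMeasure_real]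
  simpa using hE.hausdorffMeasure_preimage_le zero_le_one s

section MapLeSMul

variable {α β F : Type*} [MeasurableSpace α] [MeasurableSpace β] [NormedAddCommGroup F]
  {μ : Measure α} {ν : Measure β} {T : α → β} {c : ℝ≥0}

theorem MeasureTheory.Integrable.comp_of_map_le_smul (hT : AEMeasurable T μ)
    (hmap : μ.map T ≤ c • ν) {φ : β → F} (hφ : Integrable φ ν) : Integrable (φ ∘ T) μ :=
  (integrable_map_measure ((hφ.1.smul_measure c).mono_measure hmap) hT).1
    (hφ.smul_measure_nnreal.mono_measure hmap)

theorem integral_norm_comp_le_of_map_le_smul [NormedSpace ℝ F] (hT : AEMeasurable T μ)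
    (hmap : μ.map T ≤ c • ν) {φ : β → F} (hφ : Integrable φ ν) :
    ∫ x, ‖φ (T x)‖ ∂μ ≤ c * ∫ y, ‖φ y‖ ∂ν := by
  rw [← integral_map hT ((hφ.1.smul_measure c).mono_measure hmap).norm,
    ← smul_eq_mul, ← NNReal.smul_def, ← integral_smul_nnreal_measure]
  exact integral_mono_measure hmap (ae_of_all _ fun _ => norm_nonneg _)
    hφ.smul_measure_nnreal.norm

end MapLeSMul

theorem integral_norm_sub_le_integral_norm_sub_add_add {α F : Type*} [MeasurableSpace α]
    [NormedAddCommGroup F] {μ : Measure α} {a b c d : α → F} (ha : Integrable a μ)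
    (hb : Integrable b μ) (hc : Integrable c μ) (hd : Integrable d μ) :
    ∫ x, ‖a x - d x‖ ∂μ ≤ ∫ x, ‖a x - b x‖ ∂μ + ∫ x, ‖b x - c x‖ ∂μ + ∫ x, ‖c x - d x‖ ∂μ := by
  have hab : Integrable (fun x => ‖a x - b x‖) μ := (ha.sub hb).norm
  have hbc : Integrable (fun x => ‖b x - c x‖) μ := (hb.sub hc).norm
  have hcd : Integrable (fun x => ‖c x - d x‖) μ := (hc.sub hd).norm
  have habc : Integrable (fun x => ‖a x - b x‖ + ‖b x - c x‖) μ := hab.add hbc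
  rw [← integral_add hab hbc, ← integral_add habc hcd]
  refine integral_mono (ha.sub hd).norm (habc.add hcd) fun x => ?_
  calc ‖a x - d x‖ ≤ ‖a x - c x‖ + ‖c x - d x‖ := norm_sub_le_norm_sub_add_norm_sub _ _ _
    _ ≤ ‖a x - b x‖ + ‖b x - c x‖ + ‖c x - d x‖ := by
      gcongr; exact norm_sub_le_norm_sub_add_norm_sub _ _ _

theorem tendsto_integral_norm_sub_comp_of_monotone {F ι : Type*} [NormedAddCommGroup F]
    [NormedSpace ℝ F] {l : Filter ι} [l.IsCountablyGenerated] {T : ι → ℝ → ℝ}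
    (hT : ∀ᶠ i in l, Monotone (T i)) (hlim : ∀ x, Tendsto (fun i => T i x) l (𝓝 x))
    {h : ℝ → F} (hh : Continuous h) (hs : HasCompactSupport h) :
    Tendsto (fun i => ∫ x, ‖h x - h (T i x)‖) l (𝓝 0) := by
  obtain ⟨R, hR⟩ := hs.isCompact.isBounded.subset_closedBall 0
  have h_zero : ∀ x, x ∉ Icc (-R) R → h x = 0 := fun x hx =>
    image_eq_zero_of_notMem_tsupport fun hxs => hx (abs_le.1 (by simpa using hR hxs))
  obtain ⟨M, hM⟩ := hs.exists_bound_of_continuous hh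
  set K := Icc (-(R + 1)) (R + 1)
  have h_bound : ∀ᶠ i in l, ∀ᵐ x, ‖‖h x - h (T i x)‖‖ ≤ K.indicator (fun _ => 2 * M) x := by
    have hleft : ∀ᶠ i in l, T i (-(R + 1)) < -R :=
      (hlim _).eventually (eventually_lt_nhds (by linarith))
    have hright : ∀ᶠ i in l, R < T i (R + 1) :=
      (hlim _).eventually (eventually_gt_nhds (by linarith))
    filter_upwards [hT, hleft, hright] with i hmono hl hr
    refine ae_of_all _ fun x => ?_
    rw [norm_norm]
    by_cases hx : x ∈ K
    · rw [indicator_of_mem hx, two_mul]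
      exact (norm_sub_le _ _).trans (add_le_add (hM _) (hM _))
    · have hx' : x < -(R + 1) ∨ R + 1 < x := by
        simpa only [K, mem_Icc, not_and_or, not_le] using hx
      have hx_out : x ∉ Icc (-R) R := fun ⟨_, _⟩ => by rcases hx' with hx' | hx' <;> linarith
      have hTx_out : T i x ∉ Icc (-R) R := fun ⟨_, _⟩ => by
        rcases hx' with hx' | hx' <;> linarith [hmono hx'.le]
      rw [indicator_of_notMem hx, h_zero x hx_out, h_zero _ hTx_out, sub_zero, norm_zero]
  have hlim_pt : ∀ x, Tendsto (fun i => ‖h x - h (T i x)‖) l (𝓝 0) := fun x => by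
    simpa using ((tendsto_const_nhds (x := h x)).sub ((hh.tendsto x).comp (hlim x))).norm
  simpa using tendsto_integral_filter_of_dominated_convergence (f := fun _ => (0 : ℝ)) _
    (hT.mono fun i hi => (hh.aestronglyMeasurable.sub
      (hh.comp_aestronglyMeasurable hi.measurable.aestronglyMeasurable)).norm) h_bound
    ((integrable_indicator_iff measurableSet_Icc).2 (integrableOn_const measure_Icc_lt_top.ne))
    (ae_of_all _ hlim_pt)

theorem tendsto_integral_norm_sub_comp_of_hasCompactSupport {α F ι : Type*}
    [TopologicalSpace α] [NormalSpace α] [R1Space α] [WeaklyLocallyCompactSpace α]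
    [MeasurableSpace α] [BorelSpace α] {μ : Measure α} [μ.Regular]
    [NormedAddCommGroup F] [NormedSpace ℝ F] {l : Filter ι} {T : ι → α → α} {c : ℝ≥0}
    (hT : ∀ᶠ i in l, AEMeasurable (T i) μ ∧ μ.map (T i) ≤ c • μ)
    (hcpt : ∀ h : α → F, Continuous h → HasCompactSupport h →
      Tendsto (fun i => ∫ x, ‖h x - h (T i x)‖ ∂μ) l (𝓝 0))
    {g : α → F} (hg : Integrable g μ) :
    Tendsto (fun i => ∫ x, ‖g x - g (T i x)‖ ∂μ) l (𝓝 0) := by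
  refine tendsto_order.2 ⟨fun a ha => Eventually.of_forall fun i =>
    ha.trans_le (integral_nonneg fun _ => norm_nonneg _), fun ε hε => ?_⟩
  set δ := ε / (3 + c)
  have hδ : 0 < δ := by positivity
  obtain ⟨h, hh_supp, hgh, hh_cont, hh_int⟩ := hg.exists_hasCompactSupport_integral_sub_le hδ
  filter_upwards [hT, (tendsto_order.1 (hcpt h hh_cont hh_supp)).2 δ hδ] with i ⟨hTm, hmap⟩ hhT
  have hcomp : ∀ φ : α → F, Integrable φ μ → Integrable (fun x => φ (T i x)) μ :=
    fun φ hφ => hφ.comp_of_map_le_smul hTm hmap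
  calc ∫ x, ‖g x - g (T i x)‖ ∂μ
      ≤ ∫ x, ‖g x - h x‖ ∂μ + ∫ x, ‖h x - h (T i x)‖ ∂μ + ∫ x, ‖h (T i x) - g (T i x)‖ ∂μ :=
        integral_norm_sub_le_integral_norm_sub_add_add hg hh_int (hcomp h hh_int) (hcomp g hg)
    _ ≤ δ + δ + c * δ := by
        gcongr
        simp_rw [norm_sub_rev (h _)]
        exact (integral_norm_comp_le_of_map_le_smul hTm hmap (hg.sub hh_int)).trans
          (by gcongr; simpa only [Pi.sub_apply] using hgh)
    _ < ε := by
        rw [show δ + δ + c * δ = (2 + c) * δ by ring, mul_div_assoc', div_lt_iff₀ (by positivity)]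
        nlinarith [c.coe_nonneg]

theorem stmt_7 (fbar : ℝ) (f : ℝ → ℝ)
    (hf : Integrable (fun x => f x - fbar))
    (γ : ℝ) (hγ : 0 < γ)
    (e : ℝ → ℝ → ℝ)
    (hLip : ∀ ν : ℝ, 0 < ν → ∃ L : NNReal, LipschitzWith L (e ν))
    (hderiv : ∀ ν : ℝ, 0 < ν → ∀ᵐ x : ℝ, ∃ d, HasDerivAt (e ν) d x ∧ γ ≤ d)
    (hptws : ∀ x : ℝ, Tendsto (fun ν => e ν x) (nhdsWithin 0 (Ioi 0)) (nhds x)) :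
    (∀ ν : ℝ, 0 < ν → Integrable (fun x => f x - f (e ν x))) ∧
    Tendsto (fun ν => ∫ x : ℝ, |f x - f (e ν x)|) (nhdsWithin 0 (Ioi 0)) (nhds 0) := by
  have hexp : ∀ ν, 0 < ν → ∀ a b, a ≤ b → γ * (b - a) ≤ e ν b - e ν a := fun ν hν _ _ hab =>
    (hLip ν hν).choose_spec.mul_sub_le_sub_of_ae_le_hasDerivAt (hderiv ν hν) hab
  have hmono : ∀ ν, 0 < ν → Monotone (e ν) := fun ν hν a b hab => by
    nlinarith [hexp ν hν a b hab]
  have hmap : ∀ ν, 0 < ν → volume.map (e ν) ≤ (Real.toNNReal γ)⁻¹ • volume := fun ν hν =>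
    (antilipschitzWith_of_mul_sub_le_sub hγ (hexp ν hν)).map_volume_le (hmono ν hν).measurable
  have hsub : ∀ ν x, f x - f (e ν x) = (f x - fbar) - (f (e ν x) - fbar) := by
    intros; ring
  simp only [hsub, ← Real.norm_eq_abs]
  refine ⟨fun ν hν => hf.sub (hf.comp_of_map_le_smul (hmono ν hν).measurable.aemeasurable
    (hmap ν hν)), ?_⟩
  refine tendsto_integral_norm_sub_comp_of_hasCompactSupport (c := (Real.toNNReal γ)⁻¹) ?_
    (fun h hh hs => tendsto_integral_norm_sub_comp_of_monotone ?_ hptws hh hs) hf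
  · filter_upwards [self_mem_nhdsWithin] with ν hν
    exact ⟨(hmono ν hν).measurable.aemeasurable, hmap ν hν⟩
  · filter_upwards [self_mem_nhdsWithin] with ν hν using hmono ν hν
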